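/- The class of languages generated by admissible signed grammars is closed under disjoint union: if L₁, L₂ ⊆ Σ* are each generated by an admissible signed grammar over Σ and L₁ ∩ L₂ = ∅, then L₁ ∪ L₂ is generated by an admissible signed grammar over Σ. -/

import Mathlib

/-- A parse-tree node: either a terminal leaf or an internal node labeled by a
nonterminal with a list of children. -/
inductive PTree (N : Type) (T : Type) : Type where
  | leaf (t : T) : PTree N T
  | node (A : N) (children : List (PTree N T)) : PTree N T

namespace PTree

variable {N T : Type}

/-- The symbol (nonterminal or terminal) labeling the root of a tree. -/
def toSymbol : PTree N T → N ⊕ T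
  | leaf t => Sum.inr t
  | node A _ => Sum.inl A

/-- The yield of a parse tree: the word spelled by its leaves. -/
def yield : PTree N T → List T
  | leaf t => [t]
  | node _ cs => cs.attach.flatMap (fun c => yield c.1)
decreasing_by simp only [PTree.node.sizeOf_spec]; have h := List.sizeOf_lt_of_mem c.2; omega

/-- The sign of a parse tree w.r.t. a sign assignment on productions:
the product of the signs of the productions used at its nodes. -/
def sign (σ : N × List (N ⊕ T) → ℤ) : PTree N T → ℤ
  | leaf _ => 1
  | node A cs => σ (A, cs.map toSymbol) * (cs.attach.map (fun c => sign σ c.1)).prod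
decreasing_by simp only [PTree.node.sizeOf_spec]; have h := List.sizeOf_lt_of_mem c.2; omega

/-- Validity of a parse tree w.r.t. a set of productions: at every internal node,
the node label together with the list of symbols of its children is a production. -/
inductive Valid (R : Set (N × List (N ⊕ T))) : PTree N T → Prop where
  | leaf (t : T) : Valid R (PTree.leaf t)
  | node (A : N) (cs : List (PTree N T)) :
      (A, cs.map toSymbol) ∈ R → (∀ c ∈ cs, Valid R c) → Valid R (PTree.node A cs)

end PTree

/-- A signed grammar over a (finite) terminal alphabet `T`: a context-free grammar
with finitely many nonterminals and productions, together with a sign `1` or `-1`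
attached to each production. -/
structure SignedGrammar (T : Type) : Type 1 where
  /-- the type of nonterminals -/
  N : Type
  finN : Finite N
  /-- the start symbol -/
  start : N
  /-- the productions `A → α`, `α ∈ (N ∪ T)*` -/
  rules : Set (N × List (N ⊕ T))
  finRules : rules.Finite
  /-- the sign of each production -/
  sign : N × List (N ⊕ T) → ℤ
  sign_valid : ∀ r ∈ rules, sign r = 1 ∨ sign r = -1

namespace SignedGrammar

variable {T : Type}

/-- A parse tree over the grammar: a valid tree whose root is labeled by the start symbol. -/
def IsParseTree (G : SignedGrammar T) (t : PTree G.N T) : Prop :=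
  PTree.Valid G.rules t ∧ t.toSymbol = Sum.inl G.start

/-- The set of parse trees over `G` with yield `w`. -/
def parseTreesOf (G : SignedGrammar T) (w : List T) : Set (PTree G.N T) :=
  {t | G.IsParseTree t ∧ t.yield = w}

/-- `G` is admissible if every word has only finitely many parse trees. -/
def Admissible (G : SignedGrammar T) : Prop :=
  ∀ w : List T, (G.parseTreesOf w).Finite

/-- `n_w(G)`: the sum of the signs of all parse trees over `G` with yield `w`. -/
noncomputable def count (G : SignedGrammar T) (w : List T) : ℤ :=
  ∑ᶠ t ∈ G.parseTreesOf w, t.sign G.sign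

/-- `G` generates the language `L` if `G` is admissible, `n_w(G) = 1` for every
`w ∈ L` and `n_w(G) = 0` for every `w ∉ L`. -/
def Generates (G : SignedGrammar T) (L : Language T) : Prop :=
  G.Admissible ∧ (∀ w ∈ L, G.count w = 1) ∧ (∀ w ∉ L, G.count w = 0)

/-- An ordinary context-free grammar: every production has sign `+1`. -/
def Ordinary (G : SignedGrammar T) : Prop :=
  ∀ r ∈ G.rules, G.sign r = 1

/-- The language generated by `G` in the usual sense: all yields of parse trees. -/
def language (G : SignedGrammar T) : Language T :=
  {w | ∃ t : PTree G.N T, G.IsParseTree t ∧ t.yield = w}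

/-- `G` is unambiguous if every word has at most one parse tree. -/
def Unambiguous (G : SignedGrammar T) : Prop :=
  ∀ t₁ t₂ : PTree G.N T, G.IsParseTree t₁ → G.IsParseTree t₂ →
    t₁.yield = t₂.yield → t₁ = t₂

/-- The number of parse trees of `G` with yield `w` (degree of ambiguity of `w`). -/
noncomputable def ambCount (G : SignedGrammar T) (w : List T) : ℕ :=
  Nat.card {t : PTree G.N T // t ∈ G.parseTreesOf w}

end SignedGrammar

/-!
Put a fresh start symbol `S` on top of disjoint copies of `G₁` and `G₂`, with the two new
productions `S → S₁` and `S → S₂` of sign `1`. Since no production of a copy leaves it,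
relabelling along the copies is a sign- and yield-preserving bijection from the parse trees of
`Gᵢ` onto the trees of the combined grammar rooted at the copy of `Sᵢ`. Hence the parse trees
of `w` are those of `G₁` and of `G₂` with the new root on top, and
`n_w = n_w(G₁) + n_w(G₂)`, which for disjoint `L₁`, `L₂` is the indicator of `L₁ ∪ L₂`.
-/

open Function

theorem List.eq_of_map_eq_map {α β : Type*} {g : α → β} :
    ∀ {l l' : List α}, (∀ a ∈ l, ∀ b, g a = g b → a = b) →
      l.map g = l'.map g → l = l'
  | [], [], _, _ => rfl
  | _ :: _, [], _, h | [], _ :: _, _, h => by simp at h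
  | a :: l, b :: l', hg, h => by
    simp only [List.map_cons, List.cons.injEq] at h
    rw [hg a (by simp) b h.1, eq_of_map_eq_map (fun x hx => hg x (by simp [hx])) h.2]

namespace PTree

variable {N M T : Type}

@[elab_as_elim]
theorem inductionOn {motive : PTree N T → Prop} (t : PTree N T)
    (leaf : ∀ a, motive (.leaf a))
    (node : ∀ A cs, (∀ c ∈ cs, motive c) → motive (.node A cs)) : motive t :=
  match t with
  | .leaf a => leaf a
  | .node A cs => node A cs fun c _ => inductionOn c leaf node

@[simp] theorem yield_leaf (a : T) : (leaf a : PTree N T).yield = [a] := by rw [yield]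

@[simp] theorem yield_node (A : N) (cs : List (PTree N T)) :
    (node A cs).yield = cs.flatMap yield := by
  rw [yield]; simp

@[simp] theorem sign_leaf (σ : N × List (N ⊕ T) → ℤ) (a : T) :
    (leaf a : PTree N T).sign σ = 1 := by
  rw [sign]

@[simp] theorem sign_node (σ : N × List (N ⊕ T) → ℤ) (A : N) (cs : List (PTree N T)) :
    (node A cs).sign σ = σ (A, cs.map toSymbol) * (cs.map (sign σ)).prod := by
  rw [sign]; simp

def relabel (f : N → M) : PTree N T → PTree M T
  | leaf a => leaf a
  | node A cs => node (f A) (cs.map (relabel f))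

def relabelRule (f : N → M) : N × List (N ⊕ T) → M × List (M ⊕ T) :=
  Prod.map f (List.map (Sum.map f id))

variable (f : N → M)

@[simp] theorem relabel_leaf (a : T) : relabel f (leaf a) = leaf a := by rw [relabel]

@[simp] theorem relabel_node (A : N) (cs : List (PTree N T)) :
    relabel f (node A cs) = node (f A) (cs.map (relabel f)) := by
  rw [relabel]

@[simp] theorem relabelRule_mk (A : N) (α : List (N ⊕ T)) :
    relabelRule f (A, α) = (f A, α.map (Sum.map f id)) := rfl

theorem toSymbol_relabel (t : PTree N T) : (relabel f t).toSymbol = Sum.map f id t.toSymbol := by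
  cases t <;> simp [toSymbol]

theorem map_toSymbol_relabel (cs : List (PTree N T)) :
    (cs.map (relabel f)).map toSymbol = (cs.map toSymbol).map (Sum.map f id) := by
  simp [toSymbol_relabel]

@[simp] theorem yield_relabel (t : PTree N T) : (relabel f t).yield = t.yield := by
  induction t using inductionOn with
  | leaf a => simp
  | node A cs ih =>
    rw [relabel_node, yield_node, yield_node, List.flatMap_map]
    exact List.flatMap_congr ih

theorem sign_relabel {σ : N × List (N ⊕ T) → ℤ} {σ' : M × List (M ⊕ T) → ℤ}
    (hσ : ∀ r, σ' (relabelRule f r) = σ r) (t : PTree N T) :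
    (relabel f t).sign σ' = t.sign σ := by
  induction t using inductionOn with
  | leaf a => simp
  | node A cs ih =>
    rw [relabel_node, sign_node, sign_node, map_toSymbol_relabel, ← relabelRule_mk, hσ,
      List.map_map]
    exact congrArg (_ * List.prod ·) (List.map_congr_left ih)

variable {f}

theorem relabel_injective (hf : Injective f) : Injective (relabel f : PTree N T → PTree M T) := by
  intro t
  induction t using inductionOn with
  | leaf a => rintro (_ | _) h <;> simp_all
  | node A cs ih =>
    rintro (_ | ⟨A', cs'⟩) h
    · simp at h
    · simp only [relabel_node, node.injEq] at h
      rw [hf h.1, List.eq_of_map_eq_map ih h.2]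

variable {R : Set (N × List (N ⊕ T))} {R' : Set (M × List (M ⊕ T))}

theorem Valid.relabel (hR : relabelRule f '' R ⊆ R') {t : PTree N T} (ht : Valid R t) :
    Valid R' (t.relabel f) := by
  induction ht with
  | leaf a => simpa using Valid.leaf a
  | node A cs hA _ ih =>
    rw [relabel_node]
    refine Valid.node _ _ ?_ fun c hc => ?_
    · rw [map_toSymbol_relabel, ← relabelRule_mk]
      exact hR ⟨_, hA, rfl⟩
    · obtain ⟨c', hc', rfl⟩ := List.mem_map.mp hc
      exact ih c' hc'

theorem exists_relabel_eq (hf : Injective f)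
    (hR : ∀ A β, (f A, β) ∈ R' → (f A, β) ∈ relabelRule f '' R) {u : PTree M T}
    (hu : Valid R' u) (hroot : u.toSymbol ∈ Set.range (Sum.map f id)) :
    ∃ t, Valid R t ∧ relabel f t = u := by
  induction hu with
  | leaf a => exact ⟨leaf a, Valid.leaf a, relabel_leaf f a⟩
  | node B cs hB _ ih =>
    obtain ⟨A, rfl⟩ : ∃ A, f A = B := by
      obtain ⟨_ | _, hs⟩ := hroot <;> simp [toSymbol] at hs
      exact ⟨_, hs⟩
    obtain ⟨⟨A', α⟩, hα, hrule⟩ := hR A _ hB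
    obtain ⟨hA', hα'⟩ := Prod.mk.inj hrule
    rw [hf hA'] at hα
    have hchild : ∀ c ∈ cs, ∃ t, Valid R t ∧ relabel f t = c := fun c hc =>
      ih c hc (by
        have : c.toSymbol ∈ α.map (Sum.map f id) := hα' ▸ List.mem_map_of_mem hc
        obtain ⟨s, -, hs⟩ := List.mem_map.mp this
        exact ⟨s, hs⟩)
    choose t ht hft using hchild
    set ts := cs.attach.map fun c => t c.1 c.2
    have hts : ts.map (relabel f) = cs := by simp [ts, hft]
    have hsym : ts.map toSymbol = α := by
      refine List.map_injective_iff.mpr (Sum.map_injective.mpr ⟨hf, injective_id⟩) ?_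
      rw [hα', ← hts, map_toSymbol_relabel]
    refine ⟨node A ts, Valid.node _ _ (hsym ▸ hα) ?_, by rw [relabel_node, hts]⟩
    simp only [ts, List.mem_map, List.mem_attach, true_and, Subtype.exists]
    rintro _ ⟨c, hc, rfl⟩
    exact ht c hc

theorem image_relabel_rooted (hf : Injective f) (hsub : relabelRule f '' R ⊆ R')
    (hR : ∀ A β, (f A, β) ∈ R' → (f A, β) ∈ relabelRule f '' R) (A : N) :
    relabel f '' {t | Valid R t ∧ t.toSymbol = .inl A} =
      {u | Valid R' u ∧ u.toSymbol = .inl (f A)} := by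
  ext u
  constructor
  · rintro ⟨t, ⟨ht, hA⟩, rfl⟩
    exact ⟨ht.relabel hsub, by rw [toSymbol_relabel, hA]; rfl⟩
  · rintro ⟨hu, hA⟩
    obtain ⟨t, ht, rfl⟩ := exists_relabel_eq hf hR hu ⟨.inl A, hA.symm⟩
    refine ⟨t, ⟨ht, Sum.map_injective.mpr ⟨hf, injective_id⟩ ?_⟩, rfl⟩
    rw [← toSymbol_relabel, hA]
    rfl
end PTree

namespace SignedGrammar

open PTree

variable {T : Type}

def symbolPreimage {N M : Type} (g : M → Option N) : M ⊕ T → Option (N ⊕ T) :=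
  Sum.elim (fun B => (g B).map Sum.inl) (some ∘ Sum.inr)

theorem filterMap_symbolPreimage_map {N M : Type} {f : N → M} {g : M → Option N}
    (hg : ∀ A, g (f A) = some A) (α : List (N ⊕ T)) :
    (α.map (Sum.map f id)).filterMap (symbolPreimage g) = α := by
  have : symbolPreimage g ∘ Sum.map f id = (some : N ⊕ T → _) := by
    funext s
    cases s <;> simp [symbolPreimage, hg]
  rw [List.filterMap_map, this, List.filterMap_some]

variable (G₁ G₂ : SignedGrammar T)

/-- A copied production is recognised by pulling its right-hand side back to the original
grammar; the value on productions that are not copies is irrelevant. -/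
def unionSign : Option (G₁.N ⊕ G₂.N) × List (Option (G₁.N ⊕ G₂.N) ⊕ T) → ℤ
  | (some (.inl A), β) => G₁.sign (A, β.filterMap (symbolPreimage (·.bind Sum.getLeft?)))
  | (some (.inr A), β) => G₂.sign (A, β.filterMap (symbolPreimage (·.bind Sum.getRight?)))
  | (none, _) => 1

theorem unionSign_relabelRule_inl (r : G₁.N × List (G₁.N ⊕ T)) :
    unionSign G₁ G₂ (relabelRule (some ∘ Sum.inl) r) = G₁.sign r := by
  obtain ⟨A, α⟩ := r
  exact congrArg (fun α => G₁.sign (A, α))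
    (filterMap_symbolPreimage_map (f := some ∘ Sum.inl) (g := (·.bind Sum.getLeft?))
      (fun _ => rfl) α)

theorem unionSign_relabelRule_inr (r : G₂.N × List (G₂.N ⊕ T)) :
    unionSign G₁ G₂ (relabelRule (some ∘ Sum.inr) r) = G₂.sign r := by
  obtain ⟨A, α⟩ := r
  exact congrArg (fun α => G₂.sign (A, α))
    (filterMap_symbolPreimage_map (f := some ∘ Sum.inr) (g := (·.bind Sum.getRight?))
      (fun _ => rfl) α)

protected abbrev union : SignedGrammar T where
  N := Option (G₁.N ⊕ G₂.N)
  finN := have := G₁.finN; have := G₂.finN; inferInstance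
  start := none
  rules := {(none, [.inl (some (.inl G₁.start))]), (none, [.inl (some (.inr G₂.start))])} ∪
    relabelRule (some ∘ Sum.inl) '' G₁.rules ∪ relabelRule (some ∘ Sum.inr) '' G₂.rules
  finRules := ((Set.toFinite _).union (G₁.finRules.image _)).union (G₂.finRules.image _)
  sign := unionSign G₁ G₂
  sign_valid := by
    rintro _ (((rfl | rfl) | ⟨r, hr, rfl⟩) | ⟨r, hr, rfl⟩)
    · exact .inl rfl
    · exact .inl rfl
    · rw [unionSign_relabelRule_inl]; exact G₁.sign_valid r hr
    · rw [unionSign_relabelRule_inr]; exact G₂.sign_valid r hr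

variable {G₁ G₂}

theorem mem_union_rules_some_inl {A : G₁.N} {β : List (Option (G₁.N ⊕ G₂.N) ⊕ T)}
    (h : (some (.inl A), β) ∈ (G₁.union G₂).rules) :
    (some (.inl A), β) ∈ relabelRule (some ∘ Sum.inl) '' G₁.rules := by
  rcases h with ((h | h) | h) | ⟨⟨B, α⟩, -, h⟩
  · simp at h
  · simp at h
  · exact h
  · simp at h

theorem mem_union_rules_some_inr {A : G₂.N} {β : List (Option (G₁.N ⊕ G₂.N) ⊕ T)}
    (h : (some (.inr A), β) ∈ (G₁.union G₂).rules) :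
    (some (.inr A), β) ∈ relabelRule (some ∘ Sum.inr) '' G₂.rules := by
  rcases h with ((h | h) | ⟨⟨B, α⟩, -, h⟩) | h
  · simp at h
  · simp at h
  · simp at h
  · exact h

theorem isParseTree_union_iff (u : PTree (G₁.union G₂).N T) :
    (G₁.union G₂).IsParseTree u ↔ ∃ c ∈ relabel (some ∘ Sum.inl) '' {t | G₁.IsParseTree t} ∪
      relabel (some ∘ Sum.inr) '' {t | G₂.IsParseTree t}, u = node none [c] := by
  unfold IsParseTree
  rw [image_relabel_rooted (Option.some_injective _ |>.comp Sum.inl_injective)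
      (Set.subset_union_right.trans Set.subset_union_left)
      (fun _ _ => mem_union_rules_some_inl),
    image_relabel_rooted (Option.some_injective _ |>.comp Sum.inr_injective)
      Set.subset_union_right (fun _ _ => mem_union_rules_some_inr)]
  constructor
  · rintro ⟨hu, hroot⟩
    cases hu with
    | leaf a => simp [toSymbol] at hroot
    | node B cs hB hcs =>
      obtain rfl : B = none := Sum.inl_injective hroot
      rcases hB with ((h | h) | ⟨⟨B, α⟩, -, h⟩) | ⟨⟨B, α⟩, -, h⟩
      · obtain ⟨c, rfl, hc⟩ := List.map_eq_singleton_iff.mp (Prod.mk.inj h).2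
        exact ⟨c, .inl ⟨hcs c (by simp), hc⟩, rfl⟩
      · obtain ⟨c, rfl, hc⟩ := List.map_eq_singleton_iff.mp (Prod.mk.inj h).2
        exact ⟨c, .inr ⟨hcs c (by simp), hc⟩, rfl⟩
      · cases (Prod.mk.inj h).1
      · cases (Prod.mk.inj h).1
  · rintro ⟨c, hc, rfl⟩
    refine ⟨Valid.node _ _ ?_ (List.forall_mem_singleton.mpr (hc.elim And.left And.left)),
      rfl⟩
    rcases hc with ⟨-, h⟩ | ⟨-, h⟩
    · exact .inl (.inl (.inl (Prod.ext rfl (congrArg ([·]) h))))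
    · exact .inl (.inl (.inr (Prod.ext rfl (congrArg ([·]) h))))

theorem parseTreesOf_union (w : List T) :
    (G₁.union G₂).parseTreesOf w = (node none [·]) ''
      (relabel (some ∘ Sum.inl) '' G₁.parseTreesOf w ∪
        relabel (some ∘ Sum.inr) '' G₂.parseTreesOf w) := by
  ext u
  simp only [parseTreesOf, Set.mem_ofPred_eq, isParseTree_union_iff]
  constructor
  · rintro ⟨⟨c, hc, rfl⟩, rfl⟩
    refine ⟨c, ?_, rfl⟩
    rcases hc with ⟨t, ht, rfl⟩ | ⟨t, ht, rfl⟩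
    · exact .inl ⟨t, ⟨ht, by simp⟩, rfl⟩
    · exact .inr ⟨t, ⟨ht, by simp⟩, rfl⟩
  · rintro ⟨c, ⟨t, ⟨ht, rfl⟩, rfl⟩ | ⟨t, ⟨ht, rfl⟩, rfl⟩, rfl⟩
    · exact ⟨⟨_, .inl ⟨t, ht, rfl⟩, rfl⟩, by simp⟩
    · exact ⟨⟨_, .inr ⟨t, ht, rfl⟩, rfl⟩, by simp⟩

theorem count_union (h₁ : G₁.Admissible) (h₂ : G₂.Admissible) (w : List T) :
    (G₁.union G₂).count w = G₁.count w + G₂.count w := by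
  have hinl : Injective (relabel (T := T) (some ∘ @Sum.inl G₁.N G₂.N)) :=
    relabel_injective (Option.some_injective _ |>.comp Sum.inl_injective)
  have hinr : Injective (relabel (T := T) (some ∘ @Sum.inr G₁.N G₂.N)) :=
    relabel_injective (Option.some_injective _ |>.comp Sum.inr_injective)
  have hdisj : Disjoint (relabel (some ∘ Sum.inl) '' G₁.parseTreesOf w)
      (relabel (some ∘ Sum.inr) '' G₂.parseTreesOf w) := by
    rw [Set.disjoint_left]
    rintro _ ⟨t₁, ⟨⟨-, hroot₁⟩, -⟩, rfl⟩ ⟨t₂, ⟨⟨-, hroot₂⟩, -⟩, h⟩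
    simpa [toSymbol_relabel, hroot₁, hroot₂] using congrArg toSymbol h
  have hwrap : Injective (node none [·] : PTree (G₁.union G₂).N T → _) := by
    intro c c' h
    simpa using h
  rw [count, parseTreesOf_union, finsum_mem_image hwrap.injOn,
    finsum_mem_union hdisj ((h₁ w).image _) ((h₂ w).image _),
    finsum_mem_image hinl.injOn, finsum_mem_image hinr.injOn]
  congr 1 <;> refine finsum_mem_congr rfl fun t _ => ?_ <;>
    simp only [sign_node, List.map_singleton, List.prod_singleton]
  · exact (one_mul _).trans (sign_relabel _ (unionSign_relabelRule_inl G₁ G₂) t)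
  · exact (one_mul _).trans (sign_relabel _ (unionSign_relabelRule_inr G₁ G₂) t)

theorem admissible_union (h₁ : G₁.Admissible) (h₂ : G₂.Admissible) :
    (G₁.union G₂).Admissible := fun w =>
  parseTreesOf_union w ▸ (((h₁ w).image _).union ((h₂ w).image _)).image _

end SignedGrammar

theorem signed_grammar_closed_under_disjoint_union_general
    (T : Type) (L₁ L₂ : Language T)
    (G₁ G₂ : SignedGrammar T) (h₁ : G₁.Generates L₁) (h₂ : G₂.Generates L₂)
    (hdisj : L₁ ⊓ L₂ = ⊥) :
    ∃ G : SignedGrammar T, G.Generates (L₁ ⊔ L₂) := by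
  obtain ⟨hadm₁, hin₁, hout₁⟩ := h₁
  obtain ⟨hadm₂, hin₂, hout₂⟩ := h₂
  have hnot₂ : ∀ w ∈ L₁, w ∉ L₂ := fun w hw₁ hw₂ =>
    (hdisj ▸ ⟨hw₁, hw₂⟩ : w ∈ (⊥ : Language T))
  refine ⟨G₁.union G₂, SignedGrammar.admissible_union hadm₁ hadm₂, fun w hw => ?_,
    fun w hw => ?_⟩ <;> rw [SignedGrammar.count_union hadm₁ hadm₂]
  · rcases hw with hw | hw
    · rw [hin₁ w hw, hout₂ w (hnot₂ w hw), add_zero]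
    · rw [hout₁ w fun hw₁ => hnot₂ w hw₁ hw, hin₂ w hw, zero_add]
  · rw [hout₁ w fun h => hw (.inl h), hout₂ w fun h => hw (.inr h), add_zero]

/-- Languages generated by admissible signed grammars are closed under disjoint union. -/
theorem signed_grammar_closed_under_disjoint_union
    (T : Type) [Fintype T] (L₁ L₂ : Language T)
    (G₁ G₂ : SignedGrammar T) (h₁ : G₁.Generates L₁) (h₂ : G₂.Generates L₂)
    (hdisj : L₁ ⊓ L₂ = ⊥) :
    ∃ G : SignedGrammar T, G.Generates (L₁ ⊔ L₂) :=
  signed_grammar_closed_under_disjoint_union_general T L₁ L₂ G₁ G₂ h₁ h₂ hdisj
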